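/- Define the linear operator Q⁺ := ½(b⁻∘f⁺ + f⁺∘b⁻) on V. Then for all integers m ≥ 0 and 0 ≤ n ≤ p: if m is even, Q⁺φ_{m,n} = (−1)ⁿ m ψ_{m−1,n+1}, and if m is odd, Q⁺φ_{m,n} = (−1)ⁿ ( φ_{m−1,n+1} + (m−1) ψ_{m−1,n+1} ); and for all integers m ≥ 1 and 1 ≤ n ≤ p: if m is even, Q⁺ψ_{m,n} = (−1)^{n+1} ψ_{m−1,n+1}, and if m is odd, Q⁺ψ_{m,n} = 0. Consequently Q⁺∘Q⁺ = 0 as an operator on V. -/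

import Mathlib

open scoped BigOperators

/-- Indices of the basis vectors `φ_{m,n}`: pairs `(m,n)` of naturals with `n ≤ p`. -/
abbrev PhiIdx (p : ℕ) := {mn : ℕ × ℕ // mn.2 ≤ p}

/-- Indices of the basis vectors `ψ_{m,n}`: pairs `(m,n)` of naturals with
`1 ≤ m` and `1 ≤ n ≤ p - 1`. -/
abbrev PsiIdx (p : ℕ) := {mn : ℕ × ℕ // 1 ≤ mn.1 ∧ 1 ≤ mn.2 ∧ mn.2 + 1 ≤ p}

/-- The index set of the basis of the Fock-like carrier space. -/
abbrev FockIdx (p : ℕ) := PhiIdx p ⊕ PsiIdx p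

/-- The Fock-like carrier space: the free `ℂ`-vector space on the basis
`{φ_{m,n} : m ≥ 0, 0 ≤ n ≤ p} ∪ {ψ_{m,n} : m ≥ 1, 1 ≤ n ≤ p−1}`. -/
abbrev FockV (p : ℕ) := FockIdx p →₀ ℂ

/-- The vector `φ_{m,n}`, extended by `0` outside the range `m ≥ 0`, `0 ≤ n ≤ p`. -/
noncomputable def phi (p : ℕ) (m n : ℤ) : FockV p :=
  if h : 0 ≤ m ∧ 0 ≤ n ∧ n ≤ (p : ℤ) then
    Finsupp.single (Sum.inl ⟨(m.toNat, n.toNat), by show n.toNat ≤ p; omega⟩) 1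
  else 0

/-- The vector `ψ_{m,n}`, extended by the conventions `ψ_{m,0} = ψ_{0,n} = 0`,
`ψ_{m,p} = (1/p)·φ_{m,p}` (for `m ≥ 1`) and `ψ_{m,n} = 0` outside the range. -/
noncomputable def psi (p : ℕ) (m n : ℤ) : FockV p :=
  if h : 1 ≤ m ∧ 1 ≤ n ∧ n ≤ (p : ℤ) - 1 then
    Finsupp.single (Sum.inr ⟨(m.toNat, n.toNat),
      ⟨by show 1 ≤ m.toNat; omega, by show 1 ≤ n.toNat; omega,
       by show n.toNat + 1 ≤ p; omega⟩⟩) 1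
  else if 1 ≤ m ∧ n = (p : ℤ) then (1 / (p : ℂ)) • phi p m n
  else 0

/-- Image of the basis vector `φ_{m,n}` under `b⁺`. -/
noncomputable def bpPhi (p : ℕ) (m n : ℤ) : FockV p :=
  ((-1 : ℂ) ^ n) • phi p (m + 1) n - (2 * (n : ℂ) * (-1 : ℂ) ^ n) • psi p (m + 1) n

/-- Image of the basis vector `ψ_{m,n}` under `b⁺`. -/
noncomputable def bpPsi (p : ℕ) (m n : ℤ) : FockV p :=
  (-(-1 : ℂ) ^ n) • psi p (m + 1) n

/-- Image of the basis vector `φ_{m,n}` under `b⁻`. -/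
noncomputable def bmPhi (p : ℕ) (m n : ℤ) : FockV p :=
  if Even m then
    ((-1 : ℂ) ^ n * (m : ℂ)) • phi p (m - 1) n
      - (2 * (-1 : ℂ) ^ n * (n : ℂ) * (m : ℂ)) • psi p (m - 1) n
  else
    (-(-1 : ℂ) ^ n * (2 * (n : ℂ) - (m : ℂ) - ((p : ℂ) - 1))) • phi p (m - 1) n
      - (2 * (-1 : ℂ) ^ n * (n : ℂ) * ((m : ℂ) - 1)) • psi p (m - 1) n

/-- Image of the basis vector `ψ_{m,n}` under `b⁻`. -/
noncomputable def bmPsi (p : ℕ) (m n : ℤ) : FockV p :=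
  if Even m then
    (-(-1 : ℂ) ^ n) • phi p (m - 1) n
      + ((-1 : ℂ) ^ n * (2 * (n : ℂ) - (m : ℂ) - (p : ℂ))) • psi p (m - 1) n
  else
    (-(-1 : ℂ) ^ n) • phi p (m - 1) n
      - ((-1 : ℂ) ^ n * ((m : ℂ) - 1)) • psi p (m - 1) n

/-- Image of the basis vector `φ_{m,n}` under `f⁺`. -/
noncomputable def fpPhi (p : ℕ) (m n : ℤ) : FockV p := phi p m (n + 1)

/-- Image of the basis vector `ψ_{m,n}` under `f⁺`. -/
noncomputable def fpPsi (p : ℕ) (m n : ℤ) : FockV p := psi p m (n + 1)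

/-- Image of the basis vector `φ_{m,n}` under `f⁻`. -/
noncomputable def fmPhi (p : ℕ) (m n : ℤ) : FockV p :=
  ((n : ℂ) * ((p : ℂ) + 1 - (n : ℂ))) • phi p m (n - 1)

/-- Image of the basis vector `ψ_{m,n}` under `f⁻`. -/
noncomputable def fmPsi (p : ℕ) (m n : ℤ) : FockV p :=
  phi p m (n - 1) + (((n : ℂ) - 1) * ((p : ℂ) - (n : ℂ))) • psi p m (n - 1)

/-- The linear operator on the Fock-like space determined by its values `F m n`
on the basis vectors `φ_{m,n}` and `G m n` on the basis vectors `ψ_{m,n}`. -/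
noncomputable def mkOp (p : ℕ) (F G : ℤ → ℤ → FockV p) : Module.End ℂ (FockV p) :=
  Finsupp.lift (FockV p) ℂ (FockIdx p) fun x =>
    match x with
    | Sum.inl a => F (a.1.1 : ℤ) (a.1.2 : ℤ)
    | Sum.inr a => G (a.1.1 : ℤ) (a.1.2 : ℤ)

/-- The operator `b⁺`. -/
noncomputable def opBp (p : ℕ) : Module.End ℂ (FockV p) := mkOp p (bpPhi p) (bpPsi p)

/-- The operator `b⁻`. -/
noncomputable def opBm (p : ℕ) : Module.End ℂ (FockV p) := mkOp p (bmPhi p) (bmPsi p)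

/-- The operator `f⁺`. -/
noncomputable def opFp (p : ℕ) : Module.End ℂ (FockV p) := mkOp p (fpPhi p) (fpPsi p)

/-- The operator `f⁻`. -/
noncomputable def opFm (p : ℕ) : Module.End ℂ (FockV p) := mkOp p (fmPhi p) (fmPsi p)

/-- `b^ξ` for a sign `ξ`: `b 1 = b⁺`, `b (-1) = b⁻`. -/
noncomputable def opB (p : ℕ) (ξ : ℤ) : Module.End ℂ (FockV p) :=
  if ξ = 1 then opBp p else opBm p

/-- `f^ξ` for a sign `ξ`: `f 1 = f⁺`, `f (-1) = f⁻`. -/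
noncomputable def opF (p : ℕ) (ξ : ℤ) : Module.End ℂ (FockV p) :=
  if ξ = 1 then opFp p else opFm p

/-- The commutator `[X, Y] = X∘Y − Y∘X` of operators. -/
noncomputable def opComm {p : ℕ} (X Y : Module.End ℂ (FockV p)) : Module.End ℂ (FockV p) :=
  X * Y - Y * X

/-- The anticommutator `{X, Y} = X∘Y + Y∘X` of operators. -/
noncomputable def opAComm {p : ℕ} (X Y : Module.End ℂ (FockV p)) : Module.End ℂ (FockV p) :=
  X * Y + Y * X

/-- A sign, i.e. `+1` or `-1`, regarded as an integer. -/
def IsSign (x : ℤ) : Prop := x = 1 ∨ x = -1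

/-- The operator `Q⁺ := ½(b⁻∘f⁺ + f⁺∘b⁻)`. -/
noncomputable def opQp (p : ℕ) : Module.End ℂ (FockV p) :=
  (1 / 2 : ℂ) • (opBm p * opFp p + opFp p * opBm p)

/-!
Everything is a computation on basis vectors. The only delicate point is the boundary
convention `ψ_{m,p} = φ_{m,p}/p`: the formulas for `f⁺` and `b⁻` on `ψ_{m,n}` remain true at
`n = p`, so `Q⁺` can be evaluated on `φ_{m,n}` and `ψ_{m,n}` without boundary cases.
`Q⁺` lowers `m` by one and so flips its parity; hence `(Q⁺)²` kills every `ψ_{m,n}` and the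
`φ_{m,n}` with `m` even, while for `m` odd the two contributions `±(m-1)(-1)^n ψ_{m-2,n+2}` cancel.
-/

section
variable {p : ℕ}

lemma phi_eq_zero {m n : ℤ} (h : ¬(0 ≤ m ∧ 0 ≤ n ∧ n ≤ (p : ℤ))) : phi p m n = 0 :=
  dif_neg h

lemma psi_eq_zero {m n : ℤ} (h : ¬(1 ≤ m ∧ 1 ≤ n ∧ n ≤ (p : ℤ))) : psi p m n = 0 := by
  rw [psi, dif_neg (by omega)]
  split_ifs with htop
  -- `n = p` forces `p = 0`, where the junk value `1 / (0 : ℂ) = 0` makes the vector vanish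
  · obtain rfl : p = 0 := by omega
    simp
  · rfl

lemma psi_top {m : ℤ} (hm : 1 ≤ m) : psi p m p = (1 / (p : ℂ)) • phi p m p := by
  rw [psi, dif_neg (by omega), if_pos ⟨hm, rfl⟩]

lemma phi_natCast (m n : ℕ) (h : n ≤ p) :
    phi p m n = Finsupp.single (Sum.inl ⟨(m, n), h⟩) 1 := by
  rw [phi, dif_pos ⟨by positivity, by positivity, by exact_mod_cast h⟩]
  simp

lemma psi_natCast (m n : ℕ) (hm : 1 ≤ m) (hn : 1 ≤ n) (hnp : n + 1 ≤ p) :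
    psi p m n = Finsupp.single (Sum.inr ⟨(m, n), hm, hn, hnp⟩) 1 := by
  rw [psi, dif_pos (by omega)]
  simp

lemma mkOp_phi (F G : ℤ → ℤ → FockV p) {m n : ℤ} (hm : 0 ≤ m) (hn : 0 ≤ n)
    (hnp : n ≤ (p : ℤ)) : mkOp p F G (phi p m n) = F m n := by
  lift m to ℕ using hm
  lift n to ℕ using hn
  rw [phi_natCast m n (by exact_mod_cast hnp)]
  simp [mkOp]

lemma mkOp_psi (F G : ℤ → ℤ → FockV p) {m n : ℤ} (hm : 1 ≤ m) (hn : 1 ≤ n)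
    (hnp : n ≤ (p : ℤ) - 1) : mkOp p F G (psi p m n) = G m n := by
  lift m to ℕ using (by omega)
  lift n to ℕ using (by omega)
  rw [psi_natCast m n (by omega) (by omega) (by omega)]
  simp [mkOp]

lemma mkOp_psi_top (F G : ℤ → ℤ → FockV p) {m : ℤ} (hm : 1 ≤ m) :
    mkOp p F G (psi p m p) = (1 / (p : ℂ)) • F m p := by
  rw [psi_top hm, map_smul, mkOp_phi F G (by omega) (by positivity) le_rfl]

lemma FockV.linearMap_ext {f g : Module.End ℂ (FockV p)}
    (hphi : ∀ m n : ℤ, 0 ≤ n → f (phi p m n) = g (phi p m n))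
    (hpsi : ∀ m n : ℤ, 1 ≤ n → f (psi p m n) = g (psi p m n)) : f = g := by
  refine Finsupp.basisSingleOne.ext fun i => ?_
  rcases i with ⟨⟨m, n⟩, hnp⟩ | ⟨⟨m, n⟩, hm, hn, hnp⟩
  · simpa [phi_natCast m n hnp] using hphi m n (by positivity)
  · simpa [psi_natCast m n hm hn hnp] using hpsi m n (by exact_mod_cast hn)

lemma opFp_phi {m n : ℤ} (hn : 0 ≤ n) : opFp p (phi p m n) = phi p m (n + 1) := by
  by_cases h : 0 ≤ m ∧ n ≤ (p : ℤ)
  · rw [opFp, mkOp_phi _ _ h.1 hn h.2, fpPhi]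
  · rw [phi_eq_zero (by omega), map_zero, phi_eq_zero (by omega)]

lemma opFp_psi {m n : ℤ} (hn : 1 ≤ n) : opFp p (psi p m n) = psi p m (n + 1) := by
  by_cases h : 1 ≤ m ∧ n ≤ (p : ℤ)
  · obtain ⟨hm, hnp⟩ := h
    rcases hnp.lt_or_eq with hlt | rfl
    · rw [opFp, mkOp_psi _ _ hm hn (by omega), fpPsi]
    · rw [opFp, mkOp_psi_top _ _ hm, fpPhi, phi_eq_zero (by omega),
        psi_eq_zero (by omega), smul_zero]
  · rw [psi_eq_zero (by omega), map_zero, psi_eq_zero (by omega)]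

lemma opBm_phi (m n : ℤ) : opBm p (phi p m n) = bmPhi p m n := by
  by_cases h : 0 ≤ m ∧ 0 ≤ n ∧ n ≤ (p : ℤ)
  · exact mkOp_phi _ _ h.1 h.2.1 h.2.2
  · rw [phi_eq_zero h, map_zero, bmPhi, phi_eq_zero (by omega), psi_eq_zero (by omega)]
    split_ifs <;> simp

lemma opBm_psi {m n : ℤ} (hn : 1 ≤ n) : opBm p (psi p m n) = bmPsi p m n := by
  by_cases h : 1 ≤ m ∧ n ≤ (p : ℤ)
  · obtain ⟨hm, hnp⟩ := h
    rcases hnp.lt_or_eq with hlt | rfl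
    · exact mkOp_psi _ _ hm hn (by omega)
    have hp : (p : ℂ) ≠ 0 := by exact_mod_cast (show p ≠ 0 by omega)
    rw [opBm, mkOp_psi_top _ _ hm, bmPhi, bmPsi]
    rcases Int.even_or_odd m with he | ho
    · have : 2 ≤ m := by obtain ⟨k, rfl⟩ := he; omega
      rw [if_pos he, if_pos he, psi_top (by omega : 1 ≤ m - 1)]
      match_scalars
      field_simp
      ring
    · rw [if_neg (Int.not_even_iff_odd.mpr ho), if_neg (Int.not_even_iff_odd.mpr ho)]
      rcases hm.eq_or_lt with rfl | hlt
      · rw [psi_eq_zero (by omega)]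
        match_scalars
        field_simp
        ring
      · rw [psi_top (by omega : 1 ≤ m - 1)]
        match_scalars
        field_simp
        ring
  · rw [psi_eq_zero (by omega), map_zero, bmPsi, phi_eq_zero (by omega),
      psi_eq_zero (by omega)]
    split_ifs <;> simp

lemma opQp_apply (v : FockV p) :
    opQp p v = (1 / 2 : ℂ) • (opBm p (opFp p v) + opFp p (opBm p v)) := rfl

lemma neg_one_zpow_add_one (n : ℤ) : (-1 : ℂ) ^ (n + 1) = -(-1 : ℂ) ^ n := by
  rw [zpow_add_one₀ (by norm_num)]
  ring

/-- At `n = 0` the identity `f⁺ ψ_{m-1,n} = ψ_{m-1,n+1}` fails, but there the `ψ`-term of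
`b⁻ φ_{m,n}` carries the coefficient `n = 0`. -/
lemma opQp_phi_of_even {m n : ℤ} (hn : 0 ≤ n) (hm : Even m) :
    opQp p (phi p m n) = ((-1 : ℂ) ^ n * m) • psi p (m - 1) (n + 1) := by
  rw [opQp_apply, opFp_phi hn, opBm_phi, opBm_phi, bmPhi, bmPhi, if_pos hm, if_pos hm,
    map_sub, map_smul, map_smul, opFp_phi hn, neg_one_zpow_add_one]
  rcases hn.eq_or_lt with rfl | hpos
  · push_cast
    module
  · rw [opFp_psi hpos]
    push_cast
    module

lemma opQp_phi_of_odd {m n : ℤ} (hn : 0 ≤ n) (hm : Odd m) :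
    opQp p (phi p m n)
      = ((-1 : ℂ) ^ n) • (phi p (m - 1) (n + 1) + ((m : ℂ) - 1) • psi p (m - 1) (n + 1)) := by
  have hm' := Int.not_even_iff_odd.mpr hm
  rw [opQp_apply, opFp_phi hn, opBm_phi, opBm_phi, bmPhi, bmPhi, if_neg hm', if_neg hm',
    map_sub, map_smul, map_smul, opFp_phi hn, neg_one_zpow_add_one]
  rcases hn.eq_or_lt with rfl | hpos
  · push_cast
    module
  · rw [opFp_psi hpos]
    push_cast
    module

lemma opQp_psi_of_even {m n : ℤ} (hn : 1 ≤ n) (hm : Even m) :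
    opQp p (psi p m n) = ((-1 : ℂ) ^ (n + 1)) • psi p (m - 1) (n + 1) := by
  rw [opQp_apply, opFp_psi hn, opBm_psi (by omega), opBm_psi hn, bmPsi, bmPsi,
    if_pos hm, if_pos hm, map_add, map_smul, map_smul, opFp_phi (by omega), opFp_psi hn,
    neg_one_zpow_add_one]
  push_cast
  module

lemma opQp_psi_of_odd {m n : ℤ} (hn : 1 ≤ n) (hm : Odd m) : opQp p (psi p m n) = 0 := by
  have hm' := Int.not_even_iff_odd.mpr hm
  rw [opQp_apply, opFp_psi hn, opBm_psi (by omega), opBm_psi hn, bmPsi, bmPsi,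
    if_neg hm', if_neg hm', map_sub, map_smul, map_smul, opFp_phi (by omega), opFp_psi hn,
    neg_one_zpow_add_one]
  module

lemma opQp_opQp_phi {m n : ℤ} (hn : 0 ≤ n) : opQp p (opQp p (phi p m n)) = 0 := by
  rcases Int.even_or_odd m with hm | hm
  · rw [opQp_phi_of_even hn hm, map_smul,
      opQp_psi_of_odd (by omega) (odd_sub_one.mpr hm), smul_zero]
  · have hm1 : Even (m - 1) := even_sub_one.mpr hm
    rw [opQp_phi_of_odd hn hm, map_smul, map_add, map_smul,
      opQp_phi_of_even (by omega) hm1, opQp_psi_of_even (by omega) hm1]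
    simp only [neg_one_zpow_add_one]
    push_cast
    module

lemma opQp_opQp_psi {m n : ℤ} (hn : 1 ≤ n) : opQp p (opQp p (psi p m n)) = 0 := by
  rcases Int.even_or_odd m with hm | hm
  · rw [opQp_psi_of_even hn hm, map_smul,
      opQp_psi_of_odd (by omega) (odd_sub_one.mpr hm), smul_zero]
  · rw [opQp_psi_of_odd hn hm, map_zero]

lemma opQp_mul_self : opQp p * opQp p = 0 := by
  refine FockV.linearMap_ext (fun m n hn => ?_) (fun m n hn => ?_)
  · rw [Module.End.mul_apply, opQp_opQp_phi hn, LinearMap.zero_apply]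
  · rw [Module.End.mul_apply, opQp_opQp_psi hn, LinearMap.zero_apply]

end

theorem Qplus_action_general (p : ℕ) :
    (∀ m n : ℤ, 0 ≤ m → 0 ≤ n → n ≤ (p : ℤ) → Even m →
      opQp p (phi p m n) = ((-1 : ℂ) ^ n * (m : ℂ)) • psi p (m - 1) (n + 1)) ∧
    (∀ m n : ℤ, 0 ≤ m → 0 ≤ n → n ≤ (p : ℤ) → Odd m →
      opQp p (phi p m n)
        = ((-1 : ℂ) ^ n) • (phi p (m - 1) (n + 1)
            + ((m : ℂ) - 1) • psi p (m - 1) (n + 1))) ∧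
    (∀ m n : ℤ, 1 ≤ m → 1 ≤ n → n ≤ (p : ℤ) → Even m →
      opQp p (psi p m n) = ((-1 : ℂ) ^ (n + 1)) • psi p (m - 1) (n + 1)) ∧
    (∀ m n : ℤ, 1 ≤ m → 1 ≤ n → n ≤ (p : ℤ) → Odd m →
      opQp p (psi p m n) = 0) ∧
    opQp p * opQp p = 0 :=
  ⟨fun _ _ _ hn _ hm => opQp_phi_of_even hn hm,
    fun _ _ _ hn _ hm => opQp_phi_of_odd hn hm,
    fun _ _ _ hn _ hm => opQp_psi_of_even hn hm,
    fun _ _ _ hn _ hm => opQp_psi_of_odd hn hm,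
    opQp_mul_self⟩

/-- Action of `Q⁺` on the basis vectors and the nilpotency `(Q⁺)² = 0`. -/
theorem Qplus_action (p : ℕ) (hp : 1 ≤ p) :
    (∀ m n : ℤ, 0 ≤ m → 0 ≤ n → n ≤ (p : ℤ) → Even m →
      opQp p (phi p m n) = ((-1 : ℂ) ^ n * (m : ℂ)) • psi p (m - 1) (n + 1)) ∧
    (∀ m n : ℤ, 0 ≤ m → 0 ≤ n → n ≤ (p : ℤ) → Odd m →
      opQp p (phi p m n)
        = ((-1 : ℂ) ^ n) • (phi p (m - 1) (n + 1)
            + ((m : ℂ) - 1) • psi p (m - 1) (n + 1))) ∧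
    (∀ m n : ℤ, 1 ≤ m → 1 ≤ n → n ≤ (p : ℤ) → Even m →
      opQp p (psi p m n) = ((-1 : ℂ) ^ (n + 1)) • psi p (m - 1) (n + 1)) ∧
    (∀ m n : ℤ, 1 ≤ m → 1 ≤ n → n ≤ (p : ℤ) → Odd m →
      opQp p (psi p m n) = 0) ∧
    opQp p * opQp p = 0 :=
  Qplus_action_general p
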